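/- Let K_n be the set of n×n lower triangular (0,1)-matrices with unit diagonal, let Z = Y Y^T for some Y ∈ K_n, and let Z_0 = Y_0 Y_0^T where (Y_0)_{ij} = 0 if i < j, 1 if i = j, 1 if i > j with i+j odd, and 0 otherwise. Then |Z^{-1}| ≤ |Z_0^{-1}| entrywise. -/

import Mathlib

/-!
Write `B = Y⁻¹`. Below the diagonal, `Y * B = 1` says that each entry of a column of `B` is minus
the sum of a subset of the earlier entries of that column. If `P` and `N` are the sums of the
positive and of the negative parts of the entries seen so far, the next entry lies in `[-P, N]`,
and induction gives `P, N ≤ a_t` and `P + N ≤ a_{t+1}` for `a = 1, 1, 1, 2, 3, 5, …`; hence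
`|B i j| ≤ a_{i-j}`. The matrices `Y₀` and `Y₀⁻¹` are lower triangular Toeplitz matrices, and
`Y₀⁻¹` attains the bound with the checkerboard signs `(-1)^(i-j) a_{i-j}`. Since `Z⁻¹ = Bᵀ B`, the
triangle inequality bounds `|Z⁻¹ i j|` by `∑ₖ a_{k-i} a_{k-j}`, and this is `|Z₀⁻¹ i j|` because all
terms of `(Y₀⁻¹)ᵀ Y₀⁻¹` at `(i, j)` have the sign `(-1)^(i+j)`.
-/

open Matrix Finset

/-- `1, 1, 1, 2, 3, 5, 8, …`, i.e. `Nat.fib` except at `0`. -/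
def fibBound : ℕ → ℕ
  | 0 => 1
  | 1 => 1
  | 2 => 1
  | d + 3 => fibBound (d + 2) + fibBound (d + 1)

theorem abs_le_fibBound_of_eq_neg_sum {v : ℕ → ℝ} {w : ℕ → ℕ → ℝ}
    (hw : ∀ t s, w t s = 0 ∨ w t s = 1) (h0 : v 0 = 1)
    (hv : ∀ t, 0 < t → v t = -∑ s ∈ range t, w t s * v s) (t : ℕ) :
    |v t| ≤ fibBound t := by
  set P : ℕ → ℝ := fun t => ∑ s ∈ range t, (v s)⁺
  set N : ℕ → ℝ := fun t => ∑ s ∈ range t, (v s)⁻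
  have hbound : ∀ t, 0 < t → -P t ≤ v t ∧ v t ≤ N t := by
    intro t ht
    have hterm : ∀ s, -(v s)⁻ ≤ w t s * v s ∧ w t s * v s ≤ (v s)⁺ := by
      intro s
      have := posPart_sub_negPart (v s)
      rcases hw t s with h | h <;> rw [h] <;> constructor <;>
        linarith [posPart_nonneg (v s), negPart_nonneg (v s)]
    rw [hv t ht]
    constructor
    · exact neg_le_neg (sum_le_sum fun s _ => (hterm s).2)
    · rw [neg_le, ← sum_neg_distrib]
      exact sum_le_sum fun s _ => (hterm s).1
  have key : ∀ t, P (t + 1) ≤ fibBound (t + 1) ∧ N (t + 1) ≤ fibBound (t + 1) ∧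
      P (t + 1) + N (t + 1) ≤ fibBound (t + 2) := by
    intro t
    induction t with
    | zero => simp [P, N, h0, fibBound]
    | succ t ih =>
      obtain ⟨hPt, hNt, hPNt⟩ := ih
      obtain ⟨hlo, hhi⟩ := hbound (t + 1) t.succ_pos
      have hP0 : 0 ≤ P (t + 1) := sum_nonneg fun s _ => posPart_nonneg _
      have hN0 : 0 ≤ N (t + 1) := sum_nonneg fun s _ => negPart_nonneg _
      have hpos : (v (t + 1))⁺ ≤ N (t + 1) := by rw [posPart_def]; exact sup_le hhi hN0
      have hneg : (v (t + 1))⁻ ≤ P (t + 1) := by rw [negPart_def]; exact sup_le (by linarith) hP0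
      have habs : (v (t + 1))⁺ + (v (t + 1))⁻ ≤ fibBound (t + 1) := by
        rw [posPart_add_negPart]; exact abs_le.2 ⟨by linarith, by linarith⟩
      have hfib : (fibBound (t + 3) : ℝ) = fibBound (t + 2) + fibBound (t + 1) := by
        rw [fibBound, Nat.cast_add]
      have hP_succ : P (t + 1 + 1) = P (t + 1) + (v (t + 1))⁺ := sum_range_succ _ _
      have hN_succ : N (t + 1 + 1) = N (t + 1) + (v (t + 1))⁻ := sum_range_succ _ _
      exact ⟨by linarith, by linarith, by linarith⟩
  cases t with
  | zero => simp [h0, fibBound]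
  | succ t =>
    obtain ⟨hlo, hhi⟩ := hbound (t + 1) t.succ_pos
    obtain ⟨hPt, hNt, -⟩ := key t
    exact abs_le.2 ⟨by linarith, by linarith⟩

namespace Matrix

section LowerTriangular

variable {ι R : Type*} [Fintype ι] [LinearOrder ι]

theorem IsLowerTriangular.mul_apply_eq_sum_Icc [LocallyFiniteOrder ι]
    [NonUnitalNonAssocSemiring R] {M N : Matrix ι ι R} (hM : M.IsLowerTriangular)
    (hN : N.IsLowerTriangular) (i j : ι) :
    (M * N) i j = ∑ k ∈ Icc j i, M i k * N k j := by
  rw [mul_apply]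
  refine (sum_subset (subset_univ _) fun k _ hk => ?_).symm
  rw [mem_Icc, not_and_or, not_le, not_le] at hk
  rcases hk with hkj | hik
  · rw [hN hkj, mul_zero]
  · rw [hM hik, zero_mul]

variable [DecidableEq ι] [CommRing R] {Y : Matrix ι ι R}

theorem IsLowerTriangular.inv (hY : Y.IsLowerTriangular) : Y⁻¹.IsLowerTriangular := by
  by_cases h : IsUnit Y.det
  · have := Y.invertibleOfIsUnitDet h
    exact blockTriangular_inv_of_blockTriangular hY
  · rw [nonsing_inv_apply_not_isUnit Y h]
    exact fun _ _ _ => rfl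

theorem IsLowerTriangular.isUnit_det (hY : Y.IsLowerTriangular) (hdiag : ∀ i, Y i i = 1) :
    IsUnit Y.det := by
  rw [det_of_isLowerTriangular Y hY, prod_eq_one fun i _ => hdiag i]
  exact isUnit_one

theorem IsLowerTriangular.inv_apply_self [LocallyFiniteOrder ι] (hY : Y.IsLowerTriangular)
    (hdiag : ∀ i, Y i i = 1) (i : ι) : Y⁻¹ i i = 1 := by
  have h := congr_fun₂ (mul_nonsing_inv Y (hY.isUnit_det hdiag)) i i
  rwa [hY.mul_apply_eq_sum_Icc hY.inv, Icc_self, sum_singleton, hdiag, one_mul, one_apply_eq] at h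

end LowerTriangular

theorem abs_transpose_mul_apply_le {m n : Type*} [Fintype m] {B C : Matrix m n ℝ}
    (hBC : ∀ k l, |B k l| ≤ |C k l|) {i j : n} {ε : ℝ} (hε : |ε| = 1)
    (hC : ∀ k, C k i * C k j = ε * |C k i * C k j|) :
    |(Bᵀ * B) i j| ≤ |(Cᵀ * C) i j| := by
  simp only [mul_apply, transpose_apply]
  calc |∑ k, B k i * B k j| ≤ ∑ k, |B k i * B k j| := abs_sum_le_sum_abs _ _
    _ ≤ ∑ k, |C k i * C k j| := sum_le_sum fun k _ => by
        rw [abs_mul, abs_mul]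
        exact mul_le_mul (hBC k i) (hBC k j) (abs_nonneg _) (abs_nonneg _)
    _ = |∑ k, C k i * C k j| := by
        rw [sum_congr rfl fun k _ => hC k, ← mul_sum, abs_mul, hε, one_mul,
          abs_of_nonneg (sum_nonneg fun k _ => abs_nonneg _)]

end Matrix

theorem Fin.sum_Icc_eq_sum_range {M : Type*} [AddCommMonoid M] {n : ℕ} (f : ℕ → M) (j i : Fin n) :
    ∑ k ∈ Icc j i, f k = ∑ s ∈ range (i + 1 - j), f (j + s) := by
  rw [← sum_Ico_eq_sum_range, Ico_add_one_right_eq_Icc, ← Fin.map_valEmbedding_Icc, sum_map]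
  rfl

theorem abs_inv_apply_le_fibBound {n : ℕ} {Y : Matrix (Fin n) (Fin n) ℝ}
    (hY : Y.IsLowerTriangular) (h01 : ∀ i j, Y i j = 0 ∨ Y i j = 1) (hdiag : ∀ i, Y i i = 1)
    {i j : Fin n} (hji : j ≤ i) : |Y⁻¹ i j| ≤ fibBound ((i : ℕ) - j) := by
  -- column `j` of `Y⁻¹` and the entries of `Y` read from the diagonal downwards, `0` beyond `n`
  set v : ℕ → ℝ := fun t => if h : (j : ℕ) + t < n then Y⁻¹ ⟨j + t, h⟩ j else 0
  set w : ℕ → ℕ → ℝ := fun t s =>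
    if h : (j : ℕ) + t < n ∧ (j : ℕ) + s < n then Y ⟨j + t, h.1⟩ ⟨j + s, h.2⟩ else 0
  have hv : ∀ t, 0 < t → v t = -∑ s ∈ range t, w t s * v s := by
    intro t ht
    by_cases h : (j : ℕ) + t < n
    · set i' : Fin n := ⟨j + t, h⟩
      have hrow := congr_fun₂ (mul_nonsing_inv Y (hY.isUnit_det hdiag)) i' j
      rw [hY.mul_apply_eq_sum_Icc hY.inv, one_apply_ne (by simp [i', Fin.ext_iff]; omega)] at hrow
      have hsum : ∑ k ∈ Icc j i', Y i' k * Y⁻¹ k j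
          = ∑ k ∈ Icc j i', w t (k - j) * v (k - j) := by
        refine sum_congr rfl fun k hk => ?_
        have hjk : (j : ℕ) + (k - j) = k := by have := (mem_Icc.1 hk).1; omega
        simp [w, v, hjk, h, i']
      rw [hsum, Fin.sum_Icc_eq_sum_range (fun m => w t (m - j) * v (m - j)),
        show (i' : ℕ) + 1 - j = t + 1 by simp [i']; omega, sum_range_succ] at hrow
      simp only [Nat.add_sub_cancel_left] at hrow
      have hwtt : w t t = 1 := by simp [w, h, hdiag]
      rw [hwtt, one_mul] at hrow
      linarith
    · simp [v, w, h]
  have h0 : v 0 = 1 := by simp [v, hY.inv_apply_self hdiag]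
  have hvij : v ((i : ℕ) - j) = Y⁻¹ i j := by
    have hjk : (j : ℕ) + (i - j) = i := by have := Fin.le_def.1 hji; omega
    simp [v, hjk]
  have hw : ∀ t s, w t s = 0 ∨ w t s = 1 := by
    intro t s
    by_cases h : (j : ℕ) + t < n ∧ (j : ℕ) + s < n
    · simp only [w, dif_pos h]; exact h01 _ _
    · simp [w, h]
  rw [← hvij]
  exact abs_le_fibBound_of_eq_neg_sum hw h0 hv _

namespace Matrix

def lowerToeplitz {R : Type*} [Zero R] (n : ℕ) (f : ℕ → R) : Matrix (Fin n) (Fin n) R :=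
  of fun i j => if j ≤ i then f ((i : ℕ) - j) else 0

section LowerToeplitz

variable {R : Type*} {n : ℕ}

@[simp]
theorem lowerToeplitz_apply [Zero R] (f : ℕ → R) (i j : Fin n) :
    lowerToeplitz n f i j = if j ≤ i then f ((i : ℕ) - j) else 0 :=
  rfl

theorem isLowerTriangular_lowerToeplitz [Zero R] (f : ℕ → R) :
    (lowerToeplitz n f).IsLowerTriangular := fun i j (h : i < j) => by
  simp [not_le.2 h]

theorem lowerToeplitz_mul [NonUnitalNonAssocSemiring R] (f g : ℕ → R) :
    lowerToeplitz n f * lowerToeplitz n g =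
      lowerToeplitz n fun d => ∑ s ∈ range (d + 1), f (d - s) * g s := by
  ext i j
  rw [(isLowerTriangular_lowerToeplitz f).mul_apply_eq_sum_Icc
    (isLowerTriangular_lowerToeplitz g), lowerToeplitz_apply]
  split_ifs with hji
  · have hsum : ∑ k ∈ Icc j i, lowerToeplitz n f i k * lowerToeplitz n g k j
        = ∑ k ∈ Icc j i, f (i - k) * g (k - j) := by
      refine sum_congr rfl fun k hk => ?_
      obtain ⟨hjk, hki⟩ := mem_Icc.1 hk
      simp [hjk, hki]
    rw [hsum, Fin.sum_Icc_eq_sum_range (fun m => f (i - m) * g (m - j)),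
      show (i : ℕ) + 1 - j = i - j + 1 by omega]
    refine sum_congr rfl fun s _ => ?_
    rw [Nat.sub_add_eq, Nat.add_sub_cancel_left]
  · rw [Icc_eq_empty hji, sum_empty]

theorem lowerToeplitz_eq_one [Zero R] [One R] :
    lowerToeplitz n (fun d => if d = 0 then (1 : R) else 0) = 1 := by
  ext i j
  simp only [lowerToeplitz_apply, one_apply, Fin.ext_iff, Fin.le_def]
  split_ifs <;> first | rfl | omega

end LowerToeplitz

end Matrix

def extremalSeq (d : ℕ) : ℝ :=
  if d = 0 ∨ d % 2 = 1 then 1 else 0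

def signedFibBound (d : ℕ) : ℝ :=
  (-1) ^ d * fibBound d

theorem extremalSeq_add_two {d : ℕ} (hd : 0 < d) : extremalSeq (d + 2) = extremalSeq d := by
  unfold extremalSeq
  exact if_congr (by omega) rfl rfl

theorem sum_range_extremalSeq_mul_fibBound {d : ℕ} (hd : 0 < d) :
    ∑ s ∈ range d, extremalSeq (d - s) * fibBound s = fibBound d := by
  induction d using Nat.strong_induction_on with
  | _ d ih =>
    match d, hd with
    | 1, _ => simp [extremalSeq, fibBound]
    | 2, _ => simp [sum_range_succ, extremalSeq, fibBound]
    | d + 3, _ =>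
      have hshift : ∀ s ∈ range (d + 1),
          extremalSeq (d + 3 - s) * fibBound s = extremalSeq (d + 1 - s) * fibBound s := by
        intro s hs
        rw [show d + 3 - s = d + 1 - s + 2 by have := mem_range.1 hs; omega,
          extremalSeq_add_two (by have := mem_range.1 hs; omega)]
      rw [sum_range_succ, sum_range_succ, sum_congr rfl hshift, ih (d + 1) (by omega) d.succ_pos,
        fibBound]
      simp [extremalSeq, show d + 3 - (d + 1) = 2 by omega, show d + 3 - (d + 2) = 1 by omega]
      ring

theorem sum_range_extremalSeq_mul_signedFibBound (d : ℕ) :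
    ∑ s ∈ range (d + 1), extremalSeq (d - s) * signedFibBound s = if d = 0 then 1 else 0 := by
  cases d with
  | zero => simp [extremalSeq, signedFibBound, fibBound]
  | succ d =>
    have hterm : ∀ s ∈ range (d + 1), extremalSeq (d + 1 - s) * signedFibBound s
        = -(-1) ^ (d + 1) * (extremalSeq (d + 1 - s) * fibBound s) := by
      intro s hs
      simp only [extremalSeq, signedFibBound]
      split_ifs with h
      · have hodd : Odd (d + 1 - s) := Nat.odd_iff.2 (by have := mem_range.1 hs; omega)
        rw [show d + 1 = s + (d + 1 - s) by have := mem_range.1 hs; omega, pow_add,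
          hodd.neg_one_pow]
        ring
      · ring
    rw [sum_range_succ, sum_congr rfl hterm, ← mul_sum,
      sum_range_extremalSeq_mul_fibBound d.succ_pos]
    simp [extremalSeq, signedFibBound]

theorem lowerToeplitz_extremalSeq_mul_signedFibBound (n : ℕ) :
    lowerToeplitz n extremalSeq * lowerToeplitz n signedFibBound = 1 := by
  rw [lowerToeplitz_mul]
  simp_rw [sum_range_extremalSeq_mul_signedFibBound]
  exact lowerToeplitz_eq_one

theorem lowerToeplitz_signedFibBound_mul_apply {n : ℕ} (i j k : Fin n) :
    lowerToeplitz n signedFibBound k i * lowerToeplitz n signedFibBound k j =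
      (-1) ^ ((i : ℕ) + j) *
        |lowerToeplitz n signedFibBound k i * lowerToeplitz n signedFibBound k j| := by
  simp only [lowerToeplitz_apply]
  split_ifs with hi hj
  · have hsign : (-1 : ℝ) ^ ((k : ℕ) - i) * (-1) ^ ((k : ℕ) - j) = (-1) ^ ((i : ℕ) + j) := by
      rw [← pow_add, neg_one_pow_eq_pow_mod_two, neg_one_pow_eq_pow_mod_two ((i : ℕ) + j)]
      congr 1
      have := Fin.le_def.1 hi
      have := Fin.le_def.1 hj
      omega
    simp only [signedFibBound, abs_mul, abs_neg_one_pow, one_mul, Nat.abs_cast]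
    linear_combination (fibBound ((k : ℕ) - i) * fibBound ((k : ℕ) - j) : ℝ) * hsign
  all_goals simp

theorem abs_inv_apply_le_abs_lowerToeplitz_signedFibBound {n : ℕ}
    {Y : Matrix (Fin n) (Fin n) ℝ} (hY : Y.IsLowerTriangular)
    (h01 : ∀ i j, Y i j = 0 ∨ Y i j = 1) (hdiag : ∀ i, Y i i = 1) (i j : Fin n) :
    |Y⁻¹ i j| ≤ |lowerToeplitz n signedFibBound i j| := by
  rw [lowerToeplitz_apply]
  split_ifs with hji
  · rw [signedFibBound, abs_mul, abs_neg_one_pow, one_mul, Nat.abs_cast]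
    exact abs_inv_apply_le_fibBound hY h01 hdiag hji
  · rw [hY.inv (not_le.1 hji : i < j)]

/-- Theorem 2.4: `|Z⁻¹| ≤ |Z₀⁻¹|` entrywise for every `Z = YYᵀ` with `Y` a
lower triangular (0,1)-matrix with unit diagonal. -/
theorem stmt_13 (n : ℕ) (Y : Matrix (Fin n) (Fin n) ℝ)
    (hlower : ∀ i j, i < j → Y i j = 0)
    (h01 : ∀ i j, Y i j = 0 ∨ Y i j = 1)
    (hdiag : ∀ i, Y i i = 1)
    (Z : Matrix (Fin n) (Fin n) ℝ) (hZ : Z = Y * Yᵀ)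
    (Y₀ : Matrix (Fin n) (Fin n) ℝ)
    (hY₀ : ∀ i j : Fin n, Y₀ i j =
      if i < j then 0 else if i = j then 1 else
        if (i : ℕ) % 2 ≠ (j : ℕ) % 2 then 1 else 0)
    (Z₀ : Matrix (Fin n) (Fin n) ℝ) (hZ₀ : Z₀ = Y₀ * Y₀ᵀ) :
    ∀ i j : Fin n, |Z⁻¹ i j| ≤ |Z₀⁻¹ i j| := by
  have hY : Y.IsLowerTriangular := fun i j h => hlower i j h
  have hY₀_eq : Y₀ = lowerToeplitz n extremalSeq := by
    ext i j
    rw [hY₀, lowerToeplitz_apply, extremalSeq]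
    simp only [Fin.lt_def, Fin.le_def, Fin.ext_iff]
    split_ifs <;> first | rfl | omega
  have hY₀_inv : Y₀⁻¹ = lowerToeplitz n signedFibBound :=
    inv_eq_right_inv (hY₀_eq ▸ lowerToeplitz_extremalSeq_mul_signedFibBound n)
  have hgram_inv : ∀ X : Matrix (Fin n) (Fin n) ℝ, (X * Xᵀ)⁻¹ = X⁻¹ᵀ * X⁻¹ := fun X => by
    rw [Matrix.mul_inv_rev, transpose_nonsing_inv]
  intro i j
  rw [hZ, hZ₀, hgram_inv, hgram_inv, hY₀_inv]
  exact abs_transpose_mul_apply_le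
    (abs_inv_apply_le_abs_lowerToeplitz_signedFibBound hY h01 hdiag) (abs_neg_one_pow _)
    (lowerToeplitz_signedFibBound_mul_apply i j)
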